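/- Let H = (V, E) be a hypergraph and let M ⊆ E be a matching of H, i.e., a set of pairwise disjoint hyperedges, with |M| = δ. Then every edge-discriminator λ on H satisfies Σ_{v∈V} λ(v) ≥ δ(δ+1)/2. -/
import Mathlib


/-- `lam` is an edge-discriminator on the hypergraph with hyperedge family `E`. -/
def IsEdgeDiscriminator {V : Type*} (E : Finset (Finset V)) (lam : V → ℕ) : Prop :=
  (∀ e ∈ E, 0 < ∑ v ∈ e, lam v) ∧
  (∀ e ∈ E, ∀ f ∈ E, e ≠ f → ∑ v ∈ e, lam v ≠ ∑ v ∈ f, lam v)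

lemma aux_sum_distinct_pos (s : Finset ℕ) (h0 : 0 ∉ s) :
    s.card * (s.card + 1) ≤ 2 * ∑ x ∈ s, x := by
  induction s using Finset.strongInduction with
  | _ s ih =>
    rcases s.eq_empty_or_nonempty with rfl | hne
    · simp
    · set m := s.max' hne with hmdef
      have hm : m ∈ s := s.max'_mem hne
      have hsub : s ⊆ Finset.Icc 1 m := by
        intro x hx
        simp only [Finset.mem_Icc]
        exact ⟨Nat.one_le_iff_ne_zero.2 (fun h => h0 (h ▸ hx)), s.le_max' x hx⟩
      have hcard : s.card ≤ m := by
        calc s.card ≤ (Finset.Icc 1 m).card := Finset.card_le_card hsub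
        _ = m := by simp
      have hih := ih (s.erase m) (Finset.erase_ssubset hm)
        (fun h => h0 (Finset.mem_of_mem_erase h))
      have hce : (s.erase m).card = s.card - 1 := Finset.card_erase_of_mem hm
      have hsum : ∑ x ∈ s.erase m, x + m = ∑ x ∈ s, x :=
        Finset.sum_erase_add s _ hm
      obtain ⟨n, hn⟩ : ∃ n, s.card = n + 1 :=
        ⟨s.card - 1, (Nat.succ_pred_eq_of_pos (Finset.card_pos.2 hne)).symm⟩
      rw [hce, hn] at hih
      simp only [Nat.add_sub_cancel] at hih
      rw [hn]
      nlinarith [hcard, hsum, hih, hn ▸ hcard]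

theorem lower_bound_matching {V : Type*} [Fintype V] [DecidableEq V]
    (E : Finset (Finset V)) (M : Finset (Finset V)) (δ : ℕ)
    (hM : M ⊆ E) (hMcard : M.card = δ)
    (hmatch : ∀ e ∈ M, ∀ f ∈ M, e ≠ f → Disjoint e f)
    (lam : V → ℕ) (hdisc : IsEdgeDiscriminator E lam) :
    δ * (δ + 1) / 2 ≤ ∑ v, lam v := by
  obtain ⟨hpos, hinj⟩ := hdisc
  set w : Finset V → ℕ := fun e => ∑ v ∈ e, lam v with hw
  have hinjOn : Set.InjOn w M := by
    intro e he f hf hef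
    by_contra hne
    exact hinj e (hM he) f (hM hf) hne hef
  set t := M.image w with ht
  have hcard : t.card = δ := by
    rw [ht, Finset.card_image_of_injOn hinjOn, hMcard]
  have h0 : 0 ∉ t := by
    simp only [ht, Finset.mem_image, not_exists]
    rintro e ⟨he, h0⟩
    exact absurd h0.symm (Nat.ne_of_lt (hpos e (hM he)))
  have hsumt : ∑ x ∈ t, x = ∑ e ∈ M, w e := Finset.sum_image (fun e he f hf => hinjOn he hf)
  have hb : ∑ e ∈ M, w e = ∑ v ∈ M.biUnion id, lam v :=
    (Finset.sum_biUnion (fun e he f hf hef => hmatch e he f hf hef)).symm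
  have hle : ∑ v ∈ M.biUnion id, lam v ≤ ∑ v, lam v :=
    Finset.sum_le_sum_of_subset (Finset.subset_univ _)
  have key : δ * (δ + 1) ≤ 2 * ∑ v, lam v := by
    have := aux_sum_distinct_pos t h0
    rw [hcard, hsumt, hb] at this
    omega
  omega
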